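/- In the affine nilTemperley-Lieb algebra n\widehat{TL}_n, the elements z_i = \tilde{e}_i^n \cdot \tilde{h}_{n-i}^n for 1 \le i \le n-1 are central. -/

import Mathlib

/-!
Write `E S` and `H S` for the cyclically increasing and decreasing monomials on a proper subset
`S ⊊ ℤ/n`, so that `zᵢ = ∑ E S · H T` over `|S| = i`, `|T| = n - i`. Inside a cyclic monomial
containing `a_y`, at most one neighbour of `a_y` fails to commute with it, so `a_y` annihilates
`E S` and `H S` from both sides when `y ∈ S`. If `S` and `T` meet, choose `y ∈ S ∩ T` with
`y + 1 ∉ S ∩ T`: then `E S` ends with `a_y` or `H T` begins with it, and `E S · H T = 0`. Hence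
`zᵢ = ∑_{|S| = i} E S · H Sᶜ`. For a generator `a_j`, the term `a_j · E S · H Sᶜ` vanishes unless
`j - 1 ∈ S ∌ j`, and then equals `E S' · H S'ᶜ · a_j` where `S'` exchanges `j - 1` for `j`;
likewise `E S' · H S'ᶜ · a_j` vanishes unless `j ∈ S' ∌ j - 1`. So exchanging `j - 1` and `j`
matches the terms of `a_j zᵢ` with those of `zᵢ a_j`. Reversing words is an anti-automorphism
exchanging `E` and `H`, so every statement about `E` has a mirror image for `H`.
-/

open scoped BigOperators

namespace NilTL

/-- The defining relations of the affine nilTemperley-Lieb algebra on `n` generators: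
`aᵢ² = 0`, `aᵢaⱼ = aⱼaᵢ` when `i` and `j` are not cyclically adjacent mod `n`, and
`aᵢa_{i+1}aᵢ = a_{i+1}aᵢa_{i+1} = 0` (indices mod `n`). -/
inductive TLRel (n : ℕ) [NeZero n] :
    FreeAlgebra ℤ (Fin n) → FreeAlgebra ℤ (Fin n) → Prop
  | sq (i : Fin n) : TLRel n (FreeAlgebra.ι ℤ i * FreeAlgebra.ι ℤ i) 0
  | comm (i j : Fin n) (h1 : i ≠ j + 1) (h2 : j ≠ i + 1) :
      TLRel n (FreeAlgebra.ι ℤ i * FreeAlgebra.ι ℤ j)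
        (FreeAlgebra.ι ℤ j * FreeAlgebra.ι ℤ i)
  | braid1 (i : Fin n) :
      TLRel n (FreeAlgebra.ι ℤ i * FreeAlgebra.ι ℤ (i + 1) * FreeAlgebra.ι ℤ i) 0
  | braid2 (i : Fin n) :
      TLRel n (FreeAlgebra.ι ℤ (i + 1) * FreeAlgebra.ι ℤ i * FreeAlgebra.ι ℤ (i + 1)) 0

/-- The affine nilTemperley-Lieb algebra `n\widehat{TL}ₙ`. -/
abbrev TL (n : ℕ) [NeZero n] := RingQuot (TLRel n)

/-- The generators `aᵢ` of the affine nilTemperley-Lieb algebra. -/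
noncomputable def a (n : ℕ) [NeZero n] (i : Fin n) : TL n :=
  RingQuot.mkAlgHom ℤ (TLRel n) (FreeAlgebra.ι ℤ i)

open Fin.NatCast

/-- A canonical "gap" of a proper subset `S ⊊ ℤ/n`: an element of the complement. -/
noncomputable def gap (n : ℕ) [NeZero n] (S : Finset (Fin n)) : Fin n :=
  if h : Sᶜ.Nonempty then Sᶜ.min' h else 0

/-- The cyclically decreasing word on a proper subset `S ⊊ ℤ/n`: list the elements of `S`
in the cyclically decreasing order `g - 1, g - 2, …, g + 1` starting just below a gap `g ∉ S`,
so that whenever `i` and `i+1` both occur in `S`, the letter `i+1` appears before `i`. -/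
noncomputable def decWord (n : ℕ) [NeZero n] (S : Finset (Fin n)) : List (Fin n) :=
  ((List.range (n - 1)).map fun (t : ℕ) => gap n S - 1 - (t : Fin n)).filter
    (fun x => decide (x ∈ S))

/-- The cyclically increasing word on a proper subset `S ⊊ ℤ/n`. -/
noncomputable def incWord (n : ℕ) [NeZero n] (S : Finset (Fin n)) : List (Fin n) :=
  ((List.range (n - 1)).map fun (t : ℕ) => gap n S + 1 + (t : Fin n)).filter
    (fun x => decide (x ∈ S))

/-- `h̃ᵣⁿ`, the sum of all cyclically decreasing monomials of length `r` (for `1 ≤ r ≤ n-1`,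
these are indexed by the subsets of `ℤ/n` of size `r`). -/
noncomputable def hh (n : ℕ) [NeZero n] (r : ℕ) : TL n :=
  ∑ S ∈ Finset.powersetCard r (Finset.univ : Finset (Fin n)),
    ((decWord n S).map (a n)).prod

/-- `ẽᵣⁿ`, the sum of all cyclically increasing monomials of length `r`. -/
noncomputable def ee (n : ℕ) [NeZero n] (r : ℕ) : TL n :=
  ∑ S ∈ Finset.powersetCard r (Finset.univ : Finset (Fin n)),
    ((incWord n S).map (a n)).prod

section

open Fin.CommRing

lemma ne_univ_of_card_lt {n : ℕ} {S : Finset (Fin n)} (h : S.card < n) : S ≠ Finset.univ :=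
  (Finset.card_lt_iff_ne_univ S).mp (by rwa [Fintype.card_fin])

variable {n : ℕ} [NeZero n]

noncomputable def aProd (l : List (Fin n)) : TL n := (l.map (a n)).prod

@[simp] lemma aProd_nil : aProd ([] : List (Fin n)) = 1 := rfl

@[simp] lemma aProd_cons (x : Fin n) (l : List (Fin n)) : aProd (x :: l) = a n x * aProd l := by
  simp [aProd]

@[simp] lemma aProd_append (l₁ l₂ : List (Fin n)) : aProd (l₁ ++ l₂) = aProd l₁ * aProd l₂ := by
  simp [aProd]

lemma a_mul_self (u : Fin n) : a n u * a n u = 0 := by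
  simpa [a] using RingQuot.mkAlgHom_rel ℤ (TLRel.sq u)

lemma a_mul_a_add_one_mul_a (u : Fin n) : a n u * a n (u + 1) * a n u = 0 := by
  simpa [a] using RingQuot.mkAlgHom_rel ℤ (TLRel.braid1 u)

lemma a_add_one_mul_a_mul_a_add_one (u : Fin n) : a n (u + 1) * a n u * a n (u + 1) = 0 := by
  simpa [a] using RingQuot.mkAlgHom_rel ℤ (TLRel.braid2 u)

lemma commute_a {u v : Fin n} (h₁ : u ≠ v + 1) (h₂ : v ≠ u + 1) : Commute (a n u) (a n v) := by
  simpa [a, Commute, SemiconjBy] using RingQuot.mkAlgHom_rel ℤ (TLRel.comm u v h₁ h₂)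

lemma a_mul_a_mul_a (u v : Fin n) : a n u * a n v * a n u = 0 := by
  by_cases h₁ : v = u + 1
  · subst h₁; exact a_mul_a_add_one_mul_a u
  by_cases h₂ : u = v + 1
  · subst h₂; exact a_add_one_mul_a_mul_a_add_one v
  rw [(commute_a h₂ h₁).eq, mul_assoc, a_mul_self, mul_zero]

lemma commute_a_of_offset (c x y : Fin n) (h : (x - c).val + 2 ≤ (y - c).val)
    (h' : (y - c).val + 2 ≤ (x - c).val + n) : Commute (a n x) (a n y) := by
  have hlt : x - c < y - c := by rw [Fin.lt_def]; omega
  have hyx : (y - x).val = (y - c).val - (x - c).val := by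
    rw [show y - x = (y - c) - (x - c) by ring, Fin.sub_val_of_le hlt.le]
  have hxy : (x - y).val = n + (x - c).val - (y - c).val := by
    rw [show x - y = (x - c) - (y - c) by ring, Fin.coe_sub_iff_lt.mpr hlt]
  have h1 : ((1 : Fin n) : ℕ) ≤ 1 := by rw [Fin.val_one']; exact Nat.mod_le 1 n
  refine commute_a (fun e => ?_) (fun e => ?_)
  · rw [show x - y = 1 by rw [e]; ring] at hxy; omega
  · rw [show y - x = 1 by rw [e]; ring] at hyx; omega

lemma commute_aProd {u : Fin n} {l : List (Fin n)} (h : ∀ x ∈ l, Commute (a n u) (a n x)) :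
    Commute (a n u) (aProd l) :=
  Commute.list_prod_right _ _ (by simpa using h)

lemma commute_aProd_aProd {l₁ l₂ : List (Fin n)}
    (h : ∀ x ∈ l₁, ∀ y ∈ l₂, Commute (a n x) (a n y)) : Commute (aProd l₁) (aProd l₂) :=
  Commute.list_prod_left _ _ (by simpa using fun x hx => commute_aProd (h x hx))

noncomputable def revHom : TL n →ₐ[ℤ] (TL n)ᵐᵒᵖ :=
  RingQuot.liftAlgHom ℤ ⟨FreeAlgebra.lift ℤ fun i => MulOpposite.op (a n i), by
    rintro _ _ (i | ⟨i, j, h₁, h₂⟩ | i | i) <;>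
      simp only [map_mul, FreeAlgebra.lift_ι_apply, map_zero, ← MulOpposite.op_mul, ← mul_assoc]
    · rw [a_mul_self, MulOpposite.op_zero]
    · rw [(commute_a h₁ h₂).eq]
    · rw [a_mul_a_add_one_mul_a, MulOpposite.op_zero]
    · rw [a_add_one_mul_a_mul_a_add_one, MulOpposite.op_zero]⟩

lemma revHom_a (i : Fin n) : revHom (a n i) = MulOpposite.op (a n i) := by
  simp [revHom, a]

lemma revHom_aProd (l : List (Fin n)) : revHom (aProd l) = MulOpposite.op (aProd l.reverse) := by
  induction l with
  | nil => simp
  | cons x l ih => simp [ih, revHom_a]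

noncomputable def arc (c : Fin n) (S : Finset (Fin n)) (k m : ℕ) : List (Fin n) :=
  ((List.range' k m).map fun t : ℕ => c + (t : Fin n)).filter (· ∈ S)

lemma arc_append {c : Fin n} {S : Finset (Fin n)} {k m p : ℕ} (l : ℕ) (h : k + m = p) :
    arc c S k m ++ arc c S p l = arc c S k (m + l) := by
  subst h; simp [arc, ← List.filter_append, ← List.map_append]

lemma arc_one (c : Fin n) (S : Finset (Fin n)) (k : ℕ) :
    arc c S k 1 = if c + (k : Fin n) ∈ S then [c + (k : Fin n)] else [] := by
  by_cases h : c + (k : Fin n) ∈ S <;> simp [arc, List.range'_one, h]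

lemma arc_add_base (c : Fin n) (S : Finset (Fin n)) (d k m : ℕ) :
    arc (c + (d : Fin n)) S k m = arc c S (d + k) m := by
  simp only [arc, ← List.map_add_range', List.map_map]
  congr 2; funext t; simp only [Function.comp_apply]; push_cast; ring

lemma arc_add_self (c : Fin n) (S : Finset (Fin n)) (k m : ℕ) :
    arc c S (n + k) m = arc c S k m := by
  rw [← arc_add_base, Fin.natCast_self, add_zero]

lemma arc_congr {c : Fin n} {S S' : Finset (Fin n)} {k m : ℕ}
    (h : ∀ t, k ≤ t → t < k + m → (c + (t : Fin n) ∈ S ↔ c + (t : Fin n) ∈ S')) :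
    arc c S k m = arc c S' k m := by
  refine List.filter_congr fun x hx => ?_
  obtain ⟨t, ht, rfl⟩ := List.mem_map.mp hx
  rw [List.mem_range'_1] at ht
  simpa using h t ht.1 ht.2

lemma val_add_natCast_sub_self (c : Fin n) {t : ℕ} (ht : t < n) :
    (c + (t : Fin n) - c).val = t := by
  rw [add_sub_cancel_left, Fin.val_natCast, Nat.mod_eq_of_lt ht]

lemma mem_arc {c x : Fin n} {S : Finset (Fin n)} {k m : ℕ} (hx : x ∈ arc c S k m)
    (hkm : k + m ≤ n) : x ∈ S ∧ k ≤ (x - c).val ∧ (x - c).val < k + m := by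
  obtain ⟨hx, hxS⟩ := List.mem_filter.mp hx
  obtain ⟨t, ht, rfl⟩ := List.mem_map.mp hx
  rw [List.mem_range'_1] at ht
  have := val_add_natCast_sub_self c (t := t) (by omega)
  refine ⟨by simpa using hxS, ?_⟩
  omega

lemma incWord_eq_arc (S : Finset (Fin n)) : incWord n S = arc (gap n S) S 1 (n - 1) := by
  rw [incWord, arc, List.range_eq_range',
    show List.range' 1 (n - 1) = (List.range' 0 (n - 1)).map (1 + ·) from
      (List.map_add_range' 0 _ _).symm, List.map_map]
  congr 2; funext t; simp only [Function.comp_apply]; push_cast; ring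

lemma decWord_eq_reverse (S : Finset (Fin n)) : decWord n S = (incWord n S).reverse := by
  rw [decWord, incWord, ← List.filter_reverse, ← List.map_reverse, List.range_eq_range',
    List.reverse_range', ← List.range_eq_range', List.map_map]
  refine congrArg _ (List.map_congr_left fun t ht => ?_)
  rw [List.mem_range] at ht
  simp only [Function.comp_apply, zero_add]
  rw [Nat.cast_sub (by omega), Nat.cast_sub (by omega), Nat.cast_sub (NeZero.one_le),
    Fin.natCast_self]
  push_cast; ring

lemma natCast_sub_one : ((n - 1 : ℕ) : Fin n) = -1 := by
  rw [Nat.cast_sub NeZero.one_le, Fin.natCast_self, Nat.cast_one, zero_sub]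

lemma sub_one_ne_self (hn : 2 ≤ n) (j : Fin n) : j - 1 ≠ j := by
  rw [Ne, sub_eq_self, Fin.ext_iff, Fin.val_one', Nat.mod_eq_of_lt hn]
  simp

lemma val_sub_pos_of_mem {c x : Fin n} {S : Finset (Fin n)} (hc : c ∉ S) (hx : x ∈ S) :
    0 < (x - c).val := by
  refine Nat.pos_of_ne_zero fun h => hc ?_
  rwa [← sub_eq_zero.mp (Fin.ext h : x - c = 0)]

lemma arc_zero_eq_arc_one {c : Fin n} {S : Finset (Fin n)} (hc : c ∉ S) :
    arc c S 0 n = arc c S 1 (n - 1) := by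
  have h := arc_append (c := c) (S := S) (n - 1) (zero_add 1)
  rw [arc_one, Nat.cast_zero, add_zero, if_neg hc, List.nil_append,
    Nat.add_sub_cancel' NeZero.one_le] at h
  exact h.symm

noncomputable def incMon (S : Finset (Fin n)) : TL n := aProd (incWord n S)

noncomputable def decMon (S : Finset (Fin n)) : TL n := aProd (decWord n S)

lemma revHom_incMon (S : Finset (Fin n)) : revHom (incMon S) = MulOpposite.op (decMon S) := by
  rw [incMon, revHom_aProd, decMon, decWord_eq_reverse]

lemma revHom_decMon (S : Finset (Fin n)) : revHom (decMon S) = MulOpposite.op (incMon S) := by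
  rw [decMon, revHom_aProd, decWord_eq_reverse, List.reverse_reverse, incMon]

lemma aProd_arc_eq_of_notMem {g g' : Fin n} {S : Finset (Fin n)} (hg : g ∉ S) (hg' : g' ∉ S) :
    aProd (arc g S 0 n) = aProd (arc g' S 0 n) := by
  set d := (g' - g).val
  have hd : d < n := (g' - g).isLt
  have hg'd : g' = g + (d : Fin n) := by simp [d]
  have h₁ : arc g S 0 d ++ arc g S d (n - d) = arc g S 0 n := by
    rw [arc_append _ (zero_add d)]; congr 1; omega
  have h₂ : arc g S d (n - d) ++ arc g S 0 d = arc g' S 0 n := by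
    rw [← arc_add_self g S 0 d, arc_append _ (show d + (n - d) = n + 0 by omega), hg'd,
      arc_add_base]
    congr 1; omega
  rw [← h₁, ← h₂, aProd_append, aProd_append, (commute_aProd_aProd fun x hx y hy => ?_).eq]
  -- the two blocks lie strictly between the gaps `g` and `g'`, so no two letters are adjacent
  obtain ⟨hxS, -, hx⟩ := mem_arc hx (by omega)
  obtain ⟨hyS, hy, -⟩ := mem_arc hy (by omega)
  have hx0 := val_sub_pos_of_mem hg hxS
  have hyd : (y - g).val ≠ d := fun h =>
    hg' (by rwa [← sub_left_inj.mp (Fin.ext h : y - g = g' - g)])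
  exact commute_a_of_offset g x y (by omega) (by omega)

lemma incMon_eq {g : Fin n} {S : Finset (Fin n)} (hg : g ∉ S) : incMon S = aProd (arc g S 0 n) := by
  have hgap : gap n S ∉ S := by
    have hne : Sᶜ.Nonempty := ⟨g, Finset.mem_compl.mpr hg⟩
    rw [gap, dif_pos hne]
    exact Finset.mem_compl.mp (Finset.min'_mem _ _)
  rw [incMon, incWord_eq_arc, ← arc_zero_eq_arc_one hgap, aProd_arc_eq_of_notMem hgap hg]

lemma a_mul_aProd_arc_one_mul_a (j c : Fin n) (S : Finset (Fin n)) (k : ℕ) :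
    a n j * aProd (arc c S k 1) * a n j = 0 := by
  rw [arc_one]; split_ifs <;> simp [a_mul_a_mul_a, a_mul_self]

lemma a_mul_incMon_of_mem {j : Fin n} {S : Finset (Fin n)} (hS : S ≠ Finset.univ) (hj : j ∈ S) :
    a n j * incMon S = 0 := by
  obtain ⟨g, hg⟩ : ∃ g, g ∉ S := by simpa [Finset.eq_univ_iff_forall] using hS
  set k := (j - g).val
  have hk : k < n := (j - g).isLt
  have hk0 : 0 < k := val_sub_pos_of_mem hg hj
  have hjk : g + (k : Fin n) = j := by simp [k]
  have hsplit : arc g S 0 (k - 1) ++ arc g S (k - 1) 1 ++ arc g S k 1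
      ++ arc g S (k + 1) (n - (k + 1)) = arc g S 0 n := by
    rw [arc_append _ (zero_add _), arc_append _ (show 0 + (k - 1 + 1) = k by omega),
      arc_append _ (show 0 + (k - 1 + 1 + 1) = k + 1 by omega)]
    congr 1; omega
  have hcomm : Commute (a n j) (aProd (arc g S 0 (k - 1))) := commute_aProd fun x hx => by
    obtain ⟨hxS, -, hx⟩ := mem_arc hx (by omega)
    have hx0 := val_sub_pos_of_mem hg hxS
    exact (commute_a_of_offset g x j (by omega) (by omega)).symm
  rw [incMon_eq hg, ← hsplit, arc_one g S k, hjk, if_pos hj]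
  simp only [aProd_append, aProd_cons, aProd_nil, mul_one]
  calc _ = aProd (arc g S 0 (k - 1)) * (a n j * aProd (arc g S (k - 1) 1) * a n j)
        * aProd (arc g S (k + 1) (n - (k + 1))) := by simp only [← mul_assoc, hcomm.eq]
    _ = 0 := by rw [a_mul_aProd_arc_one_mul_a, mul_zero, zero_mul]

lemma incMon_mul_a_of_mem {j : Fin n} {S : Finset (Fin n)} (hS : S ≠ Finset.univ) (hj : j ∈ S) :
    incMon S * a n j = 0 := by
  obtain ⟨g, hg⟩ : ∃ g, g ∉ S := by simpa [Finset.eq_univ_iff_forall] using hS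
  set k := (j - g).val
  have hk : k < n := (j - g).isLt
  have hk0 : 0 < k := val_sub_pos_of_mem hg hj
  have hj' : arc g S k 1 = [j] := by rw [arc_one, show g + (k : Fin n) = j by simp [k], if_pos hj]
  rw [incMon_eq hg]
  rcases Nat.lt_or_ge (k + 1) n with hkn | hkn
  · have hsplit : arc g S 0 k ++ arc g S k 1 ++ arc g S (k + 1) 1 ++ arc g S (k + 2) (n - (k + 2))
        = arc g S 0 n := by
      rw [arc_append _ (zero_add _), arc_append _ (zero_add _),
        arc_append _ (show 0 + (k + 1 + 1) = k + 2 by omega)]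
      congr 1; omega
    have hcomm : Commute (a n j) (aProd (arc g S (k + 2) (n - (k + 2)))) :=
      commute_aProd fun y hy => by
        obtain ⟨-, hy, hy'⟩ := mem_arc hy (by omega)
        exact commute_a_of_offset g j y (by omega) (by omega)
    rw [← hsplit, hj']
    simp only [aProd_append, aProd_cons, aProd_nil, mul_one]
    calc _ = aProd (arc g S 0 k) * (a n j * aProd (arc g S (k + 1) 1) * a n j)
          * aProd (arc g S (k + 2) (n - (k + 2))) := by simp only [mul_assoc, hcomm.eq]
      _ = 0 := by rw [a_mul_aProd_arc_one_mul_a, mul_zero, zero_mul]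
  · have hsplit : arc g S 0 k ++ arc g S k 1 = arc g S 0 n := by
      rw [arc_append _ (zero_add _)]; congr 1; omega
    rw [← hsplit, hj', aProd_append, aProd_cons, aProd_nil, mul_one, mul_assoc, a_mul_self,
      mul_zero]

lemma incMon_eq_mul_a {y : Fin n} {S : Finset (Fin n)} (hy : y ∈ S) (hy1 : y + 1 ∉ S) :
    incMon S = aProd (arc (y + 1) S 0 (n - 1)) * a n y := by
  have h := arc_append (c := y + 1) (S := S) 1 (zero_add (n - 1))
  rw [arc_one, natCast_sub_one, add_neg_cancel_right, if_pos hy,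
    Nat.sub_add_cancel NeZero.one_le] at h
  rw [incMon_eq hy1, ← h, aProd_append, aProd_cons, aProd_nil, mul_one]

lemma a_mul_incMon {j : Fin n} {S S' : Finset (Fin n)} (hn : 2 ≤ n) (hj : j ∉ S) (hj' : j ∈ S')
    (hj1' : j - 1 ∉ S') (hSS' : ∀ x, x ≠ j → x ≠ j - 1 → (x ∈ S ↔ x ∈ S')) :
    a n j * incMon S = incMon S' * (if j - 1 ∈ S then a n (j - 1) else 1) := by
  have hS : arc j S 1 (n - 2) ++ arc j S (n - 1) 1 = arc j S 0 n := by
    rw [arc_zero_eq_arc_one hj, arc_append _ (show 1 + (n - 2) = n - 1 by omega)]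
    congr 1; omega
  have hS' : arc (j - 1) S' 1 1 ++ arc (j - 1) S' 2 (n - 2) = arc (j - 1) S' 0 n := by
    rw [arc_zero_eq_arc_one hj1', arc_append _ rfl]
    congr 1; omega
  have hlast : aProd (arc j S (n - 1) 1) = if j - 1 ∈ S then a n (j - 1) else 1 := by
    rw [arc_one, natCast_sub_one, ← sub_eq_add_neg]; split_ifs <;> simp
  have hfirst : aProd (arc (j - 1) S' 1 1) = a n j := by
    rw [arc_one, Nat.cast_one, sub_add_cancel, if_pos hj']; simp
  have hmid : arc (j - 1) S' 2 (n - 2) = arc j S 1 (n - 2) := by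
    rw [show 2 = 1 + 1 from rfl, ← arc_add_base, Nat.cast_one, sub_add_cancel]
    refine arc_congr fun t ht ht' => (hSS' _ (fun h => ?_) (fun h => ?_)).symm
    all_goals
      have hval := val_add_natCast_sub_self j (t := t) (by omega)
      rw [h] at hval
    · rw [sub_self, Fin.val_zero] at hval; omega
    · rw [sub_sub_cancel_left, ← natCast_sub_one, Fin.val_natCast, Nat.mod_eq_of_lt (by omega)]
        at hval
      omega
  rw [incMon_eq hj, incMon_eq hj1', ← hS, ← hS', aProd_append, aProd_append, hlast, hfirst, hmid,
    mul_assoc]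

lemma a_mul_decMon_of_mem {j : Fin n} {S : Finset (Fin n)} (hS : S ≠ Finset.univ) (hj : j ∈ S) :
    a n j * decMon S = 0 := by
  apply MulOpposite.op_injective
  rw [MulOpposite.op_mul, ← revHom_a, ← revHom_incMon, ← map_mul, incMon_mul_a_of_mem hS hj,
    map_zero, MulOpposite.op_zero]

lemma decMon_eq_a_mul {y : Fin n} {S : Finset (Fin n)} (hy : y ∈ S) (hy1 : y + 1 ∉ S) :
    decMon S = a n y * aProd (arc (y + 1) S 0 (n - 1)).reverse := by
  apply MulOpposite.op_injective
  rw [← revHom_incMon, incMon_eq_mul_a hy hy1, map_mul, revHom_aProd, revHom_a,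
    MulOpposite.op_mul]

lemma exists_mem_add_one_notMem {U : Finset (Fin n)} (hU : U.Nonempty) (hU' : U ≠ Finset.univ) :
    ∃ y ∈ U, y + 1 ∉ U := by
  by_contra! h
  obtain ⟨x, hx⟩ := hU
  have hall : ∀ t : ℕ, x + (t : Fin n) ∈ U := by
    intro t
    induction t with
    | zero => simpa using hx
    | succ t ih => rw [Nat.cast_succ, ← add_assoc]; exact h _ ih
  exact hU' (Finset.eq_univ_of_forall fun z => by simpa using hall (z - x).val)

lemma incMon_mul_decMon_of_mem {x : Fin n} {S T : Finset (Fin n)} (hS : S ≠ Finset.univ)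
    (hT : T ≠ Finset.univ) (hxS : x ∈ S) (hxT : x ∈ T) : incMon S * decMon T = 0 := by
  have hST : S ∩ T ≠ Finset.univ := fun h =>
    hS (Finset.eq_univ_of_forall fun z => Finset.mem_of_mem_inter_left (h ▸ Finset.mem_univ z))
  obtain ⟨y, hy, hy1⟩ := exists_mem_add_one_notMem ⟨x, Finset.mem_inter.mpr ⟨hxS, hxT⟩⟩ hST
  rw [Finset.mem_inter] at hy hy1
  by_cases hyS : y + 1 ∈ S
  · rw [decMon_eq_a_mul hy.2 fun h => hy1 ⟨hyS, h⟩, ← mul_assoc, incMon_mul_a_of_mem hS hy.1,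
      zero_mul]
  · rw [incMon_eq_mul_a hy.1 hyS, mul_assoc, a_mul_decMon_of_mem hT hy.2, mul_zero]

noncomputable def zTerm (S : Finset (Fin n)) : TL n := incMon S * decMon Sᶜ

lemma a_mul_zTerm_eq_zero {j : Fin n} {S : Finset (Fin n)} (hn : 2 ≤ n) (hS : S ≠ Finset.univ)
    (hS' : S.Nonempty) (hj : ¬(j - 1 ∈ S ∧ j ∉ S)) : a n j * zTerm S = 0 := by
  rw [zTerm, ← mul_assoc]
  by_cases hjS : j ∈ S
  · rw [a_mul_incMon_of_mem hS hjS, zero_mul]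
  have hj1 : j - 1 ∉ S := fun h => hj ⟨h, hjS⟩
  have hj1' : j - 1 ∉ insert j S := by simp [sub_one_ne_self hn j, hj1]
  rw [a_mul_incMon hn hjS (Finset.mem_insert_self j S) hj1' (fun x hx _ => by simp [hx]),
    if_neg hj1, mul_one]
  exact incMon_mul_decMon_of_mem (fun h => hj1' (h ▸ Finset.mem_univ _))
    ((Finset.compl_ne_univ_iff_nonempty S).mpr hS') (Finset.mem_insert_self j S)
    (Finset.mem_compl.mpr hjS)

lemma zTerm_mul_a_eq_zero {j : Fin n} {S : Finset (Fin n)} (hn : 2 ≤ n) (hS : S ≠ Finset.univ)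
    (hS' : S.Nonempty) (hj : ¬(j ∈ S ∧ j - 1 ∉ S)) : zTerm S * a n j = 0 := by
  have h := a_mul_zTerm_eq_zero hn (S := Sᶜ) ((Finset.compl_ne_univ_iff_nonempty S).mpr hS')
    (by rwa [← Finset.compl_ne_univ_iff_nonempty, compl_compl]) (by simpa [and_comm] using hj)
  rw [zTerm, compl_compl, ← mul_assoc] at h
  apply MulOpposite.op_injective
  rw [zTerm, MulOpposite.op_mul, MulOpposite.op_mul, ← revHom_a, ← revHom_incMon,
    ← revHom_decMon, ← map_mul, ← map_mul, ← mul_assoc, h, map_zero, MulOpposite.op_zero]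

lemma a_mul_zTerm_eq {j : Fin n} {S S' : Finset (Fin n)} (hn : 2 ≤ n) (hS : j - 1 ∈ S ∧ j ∉ S)
    (hS' : j ∈ S' ∧ j - 1 ∉ S') (hSS' : ∀ x, x ≠ j → x ≠ j - 1 → (x ∈ S ↔ x ∈ S')) :
    a n j * zTerm S = zTerm S' * a n j := by
  have hinc := a_mul_incMon hn hS.2 hS'.1 hS'.2 hSS'
  rw [if_pos hS.1] at hinc
  have hdec := a_mul_incMon hn (S := S'ᶜ) (S' := Sᶜ) (by simpa using hS'.1) (by simpa using hS.2)
    (by simpa using hS.1) fun x h₁ h₂ => by simpa using not_congr (hSS' x h₁ h₂).symm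
  rw [if_pos (by simpa using hS'.2)] at hdec
  replace hdec : a n (j - 1) * decMon Sᶜ = decMon S'ᶜ * a n j := by
    apply MulOpposite.op_injective
    simpa only [map_mul, revHom_a, revHom_incMon, ← MulOpposite.op_mul] using
      (congrArg revHom hdec).symm
  rw [zTerm, zTerm, ← mul_assoc, hinc, mul_assoc, hdec, mul_assoc]

lemma a_mul_zTerm (hn : 2 ≤ n) (j : Fin n) {S : Finset (Fin n)} (hS : S ≠ Finset.univ)
    (hS' : S.Nonempty) :
    a n j * zTerm S = zTerm (S.map (Equiv.swap (j - 1) j).toEmbedding) * a n j := by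
  -- both sides vanish unless `j - 1 ∈ S` and `j ∉ S`
  set σ := Equiv.swap (j - 1) j
  have hmem : ∀ x, x ∈ S.map σ.toEmbedding ↔ σ x ∈ S := fun x => by
    rw [Finset.mem_map_equiv, Equiv.symm_swap]
  by_cases h : j - 1 ∈ S ∧ j ∉ S
  · refine a_mul_zTerm_eq hn h ?_ fun x h₁ h₂ => ?_
    · simpa [hmem, σ, Equiv.swap_apply_right, Equiv.swap_apply_left] using h
    · rw [hmem, Equiv.swap_apply_of_ne_of_ne h₂ h₁]
  · refine (a_mul_zTerm_eq_zero hn hS hS' h).trans (zTerm_mul_a_eq_zero hn ?_ hS'.map ?_).symm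
    · intro hσS
      apply hS
      simpa [Finset.map_map] using congrArg (Finset.map σ.symm.toEmbedding) hσS
    · simpa [hmem, σ, Equiv.swap_apply_right, Equiv.swap_apply_left] using h

lemma ee_mul_hh {i : ℕ} (hi₁ : 1 ≤ i) (hi₂ : i ≤ n - 1) :
    ee n i * hh n (n - i) = ∑ S ∈ Finset.powersetCard i Finset.univ, zTerm S := by
  rw [ee, hh, Finset.sum_mul_sum]
  refine Finset.sum_congr rfl fun S hS => ?_
  have hSi := (Finset.mem_powersetCard.mp hS).2
  have hSc : Sᶜ ∈ Finset.powersetCard (n - i) Finset.univ := by simp [Finset.card_compl, hSi]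
  refine (Finset.sum_eq_single_of_mem Sᶜ hSc fun T hT hTS => ?_).trans rfl
  have hTi := (Finset.mem_powersetCard.mp hT).2
  obtain ⟨x, hxT, hxS⟩ : ∃ x ∈ T, x ∈ S := by
    by_contra! h
    exact hTS (Finset.eq_of_subset_of_card_le (fun x hx => Finset.mem_compl.mpr (h x hx))
      (by simp [Finset.card_compl, hSi, hTi]))
  exact incMon_mul_decMon_of_mem (ne_univ_of_card_lt (by omega)) (ne_univ_of_card_lt (by omega))
    hxS hxT

lemma commute_a_ee_mul_hh {i : ℕ} (hi₁ : 1 ≤ i) (hi₂ : i ≤ n - 1) (j : Fin n) :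
    Commute (a n j) (ee n i * hh n (n - i)) := by
  have hn : 2 ≤ n := by omega
  set σ := Equiv.swap (j - 1) j
  rw [ee_mul_hh hi₁ hi₂, Commute, SemiconjBy, Finset.mul_sum, Finset.sum_mul]
  calc _ = ∑ S ∈ Finset.powersetCard i Finset.univ, zTerm (σ.finsetCongr S) * a n j :=
        Finset.sum_congr rfl fun S hS => by
          have hSi := (Finset.mem_powersetCard.mp hS).2
          exact a_mul_zTerm hn j (ne_univ_of_card_lt (by omega)) (Finset.card_pos.mp (by omega))
    _ = _ := Finset.sum_equiv σ.finsetCongr (fun S => by simp) fun _ _ => rfl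

lemma commute_of_forall_commute_a {z : TL n} (h : ∀ j, Commute z (a n j)) (x : TL n) :
    Commute z x := by
  obtain ⟨y, rfl⟩ := RingQuot.mkAlgHom_surjective ℤ (TLRel n) x
  induction y using FreeAlgebra.induction with
  | grade0 r => rw [AlgHom.commutes]; exact Algebra.commute_algebraMap_right r z
  | grade1 i => exact h i
  | mul y₁ y₂ h₁ h₂ => rw [map_mul]; exact h₁.mul_right h₂
  | add y₁ y₂ h₁ h₂ => rw [map_add]; exact h₁.add_right h₂

end

/-- in the affine nilTemperley-Lieb algebra `n\widehat{TL}ₙ`, the elements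
`zᵢ = ẽᵢⁿ · h̃_{n-i}ⁿ` (for `1 ≤ i ≤ n-1`) are central. -/
theorem stmt12 (n : ℕ) [NeZero n] (i : ℕ) (hi1 : 1 ≤ i) (hi2 : i ≤ n - 1)
    (x : TL n) :
    (ee n i * hh n (n - i)) * x = x * (ee n i * hh n (n - i)) :=
  (commute_of_forall_commute_a (fun j => (commute_a_ee_mul_hh hi1 hi2 j).symm) x).eq

end NilTL
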